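/- Every finite normal-form game Γ has at least one correlated optimin: there exists P̄ ∈ Δ(A) such that no Q ∈ Δ(A) satisfies π_i(Q) ≥ π_i(P̄) for every player i with strict inequality for at least one player. -/

import Mathlib

open Finset

variable {I : Type*} [Fintype I] [DecidableEq I] [Nonempty I]
variable {A : I → Type*} [∀ i, Fintype (A i)] [∀ i, DecidableEq (A i)]
  [∀ i, Nonempty (A i)]

/-- The unnormalized gain of player `j` from switching to `b` after receiving
recommendation `r`:  `Σ_{a_{-j}} P(r, a_{-j}) · [u_j(b, a_{-j}) − u_j(r, a_{-j})]`. -/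
noncomputable def gain (u : I → (∀ i, A i) → ℝ) (P : (∀ i, A i) → ℝ)
    (j : I) (r b : A j) : ℝ :=
  ∑ a : ∀ i, A i,
    if a j = r then P a * (u j (Function.update a j b) - u j a) else 0

/-- `δ` is an admissible recommendation-contingent deviation profile for the opponents
of player `i`: each `δ j r` lies in `B_j^P(r) = {r} ∪ {b : gain > 0}`. -/
def Admissible (u : I → (∀ i, A i) → ℝ) (P : (∀ i, A i) → ℝ) (i : I)
    (δ : ∀ j, A j → A j) : Prop :=
  ∀ j, j ≠ i → ∀ r : A j, δ j r = r ∨ 0 < gain u P j r (δ j r)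

/-- The action profile `(a_i, δ_{-i}(a_{-i}))`. -/
def applyDev (i : I) (δ : ∀ j, A j → A j) (a : ∀ j, A j) : ∀ j, A j :=
  fun j => if j = i then a j else δ j (a j)

/-- Correlated optimin performance of player `i` at `P`:
`π_i(P) = min_{δ_{-i} ∈ B_{-i}^P} Σ_a P(a) u_i(a_i, δ_{-i}(a_{-i}))`. -/
noncomputable def perf (u : I → (∀ i, A i) → ℝ) (P : (∀ i, A i) → ℝ) (i : I) : ℝ :=
  sInf {x | ∃ δ : ∀ j, A j → A j, Admissible u P i δ ∧
    x = ∑ a : ∀ j, A j, P a * u i (applyDev i δ a)}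

/-! Each `π_i` is upper semicontinuous: a deviation whose gains are strictly positive at `P`
keeps them positive near `P`, so near `P` the minimum runs over at least the deviations
admissible at `P`. Hence `∑ i, π_i` attains its maximum on the compact simplex, and a maximizer
of the sum cannot be Pareto dominated. -/

theorem not_exists_pareto_improvement_of_isMaxOn_sum {X ι : Type*} [Fintype ι]
    {f : ι → X → ℝ} {s : Set X} {x : X} (hmax : IsMaxOn (fun y => ∑ i, f i y) s x) :
    ¬ ∃ y ∈ s, (∀ i, f i x ≤ f i y) ∧ ∃ i, f i x < f i y := by
  rintro ⟨y, hy, hle, i, hlt⟩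
  exact (hmax hy).not_gt (sum_lt_sum (fun j _ => hle j) ⟨i, mem_univ i, hlt⟩)

section Performance

variable {N : Type*} [Fintype N] [DecidableEq N] {S : N → Type*} [∀ j, Fintype (S j)]
  (u : N → (∀ j, S j) → ℝ) (i : N)

noncomputable def devPayoff (P : (∀ j, S j) → ℝ) (δ : ∀ j, S j → S j) : ℝ :=
  ∑ a : ∀ j, S j, P a * u i (applyDev i δ a)

theorem continuous_devPayoff (δ : ∀ j, S j → S j) :
    Continuous fun P => devPayoff u i P δ :=
  continuous_finsetSum _ fun a _ => (continuous_apply a).mul continuous_const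

variable [∀ j, DecidableEq (S j)]

theorem continuous_gain (j : N) (r b : S j) : Continuous fun P => gain u P j r b :=
  continuous_finsetSum _ fun a _ => by
    split_ifs
    exacts [(continuous_apply a).mul continuous_const, continuous_const]

theorem eventually_admissible {P : (∀ j, S j) → ℝ} {δ : ∀ j, S j → S j}
    (hδ : Admissible u P i δ) : ∀ᶠ Q in nhds P, Admissible u Q i δ := by
  simp only [Admissible, Filter.eventually_imp_distrib_left, Filter.eventually_all]
  intro j hj r
  rcases hδ j hj r with hfix | hpos
  · exact .of_forall fun _ => Or.inl hfix
  · exact (continuousAt_const.eventually_lt (continuous_gain u j r (δ j r)).continuousAt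
      hpos).mono fun _ => Or.inr

theorem finite_admissible_devPayoffs (P : (∀ j, S j) → ℝ) :
    {x | ∃ δ, Admissible u P i δ ∧ x = devPayoff u i P δ}.Finite :=
  (Set.finite_range fun δ => devPayoff u i P δ).subset fun _ ⟨δ, _, hx⟩ => ⟨δ, hx.symm⟩

theorem perf_le_devPayoff {P : (∀ j, S j) → ℝ} {δ : ∀ j, S j → S j}
    (hδ : Admissible u P i δ) : perf u P i ≤ devPayoff u i P δ :=
  csInf_le (finite_admissible_devPayoffs u i P).bddBelow ⟨δ, hδ, rfl⟩

theorem exists_admissible_perf_eq (P : (∀ j, S j) → ℝ) :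
    ∃ δ, Admissible u P i δ ∧ perf u P i = devPayoff u i P δ := by
  refine Set.Nonempty.csInf_mem ?_ (finite_admissible_devPayoffs u i P)
  have hid : Admissible u P i fun _ r => r := fun _ _ _ => Or.inl rfl
  exact ⟨_, _, hid, rfl⟩

theorem upperSemicontinuous_perf : UpperSemicontinuous fun P => perf u P i := by
  intro P y hy
  obtain ⟨δ, hδ, hPδ⟩ := exists_admissible_perf_eq u i P
  have hnear : ∀ᶠ Q in nhds P, devPayoff u i Q δ < y :=
    (continuous_devPayoff u i δ).continuousAt.eventually_lt continuousAt_const (hPδ ▸ hy)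
  filter_upwards [hnear, eventually_admissible u i hδ] with Q hlt hadm
  exact (perf_le_devPayoff u i hadm).trans_lt hlt

end Performance

/-- every finite game has a correlated optimin, i.e. a distribution
`P̄ ∈ Δ(A)` that is Pareto undominated with respect to `(π_1, …, π_n)`. -/
theorem exists_correlated_optimin (u : I → (∀ i, A i) → ℝ) :
    ∃ Pbar ∈ stdSimplex ℝ (∀ i, A i),
      ¬ ∃ Q ∈ stdSimplex ℝ (∀ i, A i),
        (∀ i : I, perf u Pbar i ≤ perf u Q i) ∧
        (∃ i : I, perf u Pbar i < perf u Q i) := by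
  have hsum : UpperSemicontinuous fun P => ∑ i, perf u P i :=
    upperSemicontinuous_sum fun i _ => upperSemicontinuous_perf u i
  obtain ⟨Pbar, hPbar, hmax⟩ := (hsum.upperSemicontinuousOn _).exists_isMaxOn
    ⟨_, single_mem_stdSimplex ℝ (Classical.arbitrary _)⟩ (isCompact_stdSimplex ℝ _)
  exact ⟨Pbar, hPbar, not_exists_pareto_improvement_of_isMaxOn_sum hmax⟩
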